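/- arXiv:0804.2189 — 4 statements merged into one kernel-verified Lean document; each statement's English description precedes it below -/
import Mathlib

section
/- The function d_max(η) = N_t·N_r·[1 − gη/((1+gη)·ln(1+gη))] satisfies 0 < d_max(η) < N_t·N_r for all η > 0, is strictly increasing in η, and tends to N_t·N_r as η → ∞. -/
/-!
Writing `t = 1 + gη`, the subtracted term `gη / ((1 + gη) log(1 + gη))` is the reciprocal of the
slope `t log t / (t - 1)` of the secant of the strictly convex function `t ↦ t log t` between
`1` and `t`. That slope strictly increases with `t`, exceeds the slope `1` of the tangent at
`t = 1`, and is at least `log t`, so it tends to `∞`.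
-/

open Filter Real Set

noncomputable def mulLogSecant (t : ℝ) : ℝ := t * log t / (t - 1)

lemma div_mul_log_eq_inv_mulLogSecant (x : ℝ) :
    x / ((1 + x) * log (1 + x)) = (mulLogSecant (1 + x))⁻¹ := by
  rw [mulLogSecant, inv_div, add_sub_cancel_left]

lemma mulLogSecant_strictMonoOn : StrictMonoOn mulLogSecant (Ioi 1) := by
  intro s hs t ht hst
  have hs0 : s ∈ Ici (0 : ℝ) := show 0 ≤ s from zero_le_one.trans hs.le
  have ht0 : t ∈ Ici (0 : ℝ) := show 0 ≤ t from zero_le_one.trans ht.le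
  simpa [mulLogSecant] using
    strictConvexOn_mul_log.secant_strict_mono (a := 1) (by simp) hs0 ht0 hs.ne' ht.ne' hst

lemma one_lt_mulLogSecant {t : ℝ} (ht : 1 < t) : 1 < mulLogSecant t := by
  have ht0 : 0 < t := by linarith
  have hlog : 1 - t⁻¹ < log t := by
    have h := log_lt_sub_one_of_pos (inv_pos.2 ht0) (inv_ne_one.2 ht.ne')
    rw [log_inv] at h
    linarith
  rw [mulLogSecant, lt_div_iff₀ (by linarith), one_mul]
  calc t - 1 = t * (1 - t⁻¹) := by field_simp
    _ < t * log t := by gcongr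

lemma log_le_mulLogSecant {t : ℝ} (ht : 1 < t) : log t ≤ mulLogSecant t := by
  have hlog : 0 < log t := log_pos ht
  rw [mulLogSecant, le_div_iff₀ (by linarith)]
  nlinarith

lemma tendsto_mulLogSecant_atTop : Tendsto mulLogSecant atTop atTop :=
  tendsto_atTop_mono' atTop ((eventually_gt_atTop 1).mono fun _ ↦ log_le_mulLogSecant)
    tendsto_log_atTop

section OneSubInv

variable {φ : ℝ → ℝ} {C : ℝ}

lemma mul_one_sub_inv_mem_Ioo {y : ℝ} (hC : 0 < C) (hy : 1 < y) :
    C * (1 - y⁻¹) ∈ Ioo 0 C := by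
  have hinv : y⁻¹ < 1 := inv_lt_one_of_one_lt₀ hy
  have hinv0 : 0 < y⁻¹ := inv_pos.2 (by linarith)
  exact ⟨by nlinarith, by nlinarith⟩

lemma StrictMonoOn.const_mul_one_sub_inv {s : Set ℝ} (hC : 0 < C) (hφ : StrictMonoOn φ s)
    (hpos : ∀ x ∈ s, 0 < φ x) : StrictMonoOn (fun x ↦ C * (1 - (φ x)⁻¹)) s := by
  intro a ha b hb hab
  have hφa := hpos a ha
  have hφab := hφ ha hb hab
  dsimp only
  gcongr

lemma Filter.Tendsto.const_mul_one_sub_inv {l : Filter ℝ} (hφ : Tendsto φ l atTop) :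
    Tendsto (fun x ↦ C * (1 - (φ x)⁻¹)) l (nhds C) := by
  simpa using (hφ.inv_tendsto_atTop.const_sub 1).const_mul C

end OneSubInv

/-- The maximum finite-SNR diversity gain
`d_max(η) = N_t·N_r·(1 − gη/((1+gη)·ln(1+gη)))` satisfies
`0 < d_max(η) < N_t·N_r` for all `η > 0`, is strictly increasing on `(0,∞)`,
and tends to `N_t·N_r` as `η → ∞`. -/
theorem dmax_properties (Nt Nr : ℕ) (hNt : 0 < Nt) (hNr : 0 < Nr) (g : ℝ) (hg : 0 < g) :
    (∀ η : ℝ, 0 < η →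
        0 < (Nt : ℝ) * Nr * (1 - g * η / ((1 + g * η) * Real.log (1 + g * η))) ∧
        (Nt : ℝ) * Nr * (1 - g * η / ((1 + g * η) * Real.log (1 + g * η))) <
          (Nt : ℝ) * Nr) ∧
    StrictMonoOn
      (fun η : ℝ => (Nt : ℝ) * Nr * (1 - g * η / ((1 + g * η) * Real.log (1 + g * η))))
      (Set.Ioi 0) ∧
    Tendsto
      (fun η : ℝ => (Nt : ℝ) * Nr * (1 - g * η / ((1 + g * η) * Real.log (1 + g * η))))
      atTop (nhds ((Nt : ℝ) * Nr)) := by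
  have hC : (0 : ℝ) < Nt * Nr := by positivity
  have hmaps : MapsTo (fun η : ℝ ↦ 1 + g * η) (Ioi 0) (Ioi 1) := fun η (hη : 0 < η) ↦
    show 1 < 1 + g * η by nlinarith
  have hgt : ∀ η ∈ Ioi (0 : ℝ), 1 < mulLogSecant (1 + g * η) := fun η hη ↦
    one_lt_mulLogSecant (hmaps hη)
  have hmono : StrictMonoOn (fun η ↦ mulLogSecant (1 + g * η)) (Ioi 0) :=
    mulLogSecant_strictMonoOn.comp (fun a _ b _ hab ↦ by gcongr) hmaps
  have htendsto : Tendsto (fun η ↦ mulLogSecant (1 + g * η)) atTop atTop :=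
    tendsto_mulLogSecant_atTop.comp
      (tendsto_atTop_add_const_left _ 1 (tendsto_id.const_mul_atTop hg))
  simp only [div_mul_log_eq_inv_mulLogSecant]
  exact ⟨fun η hη ↦ mul_one_sub_inv_mem_Ioo hC (hgt η hη),
    hmono.const_mul_one_sub_inv hC fun η hη ↦ lt_trans one_pos (hgt η hη),
    htendsto.const_mul_one_sub_inv⟩
end

section
/- The optimization min over (α₁,…,αₜ) ∈ ℝ₊ᵗ subject to ∑_{l=1}^t (1−α_l)⁺ ≤ r of ∑_{l=1}^t (N_t+N_r−2l+1)·α_l, for integer 0 ≤ r ≤ t, equals (N_t−r)(N_r−r), where t = min(N_t,N_r). -/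
open Finset

private lemma sum_c_range (Nt Nr n : ℕ) :
    ∑ l ∈ Finset.range n, ((Nt : ℝ) + Nr - 2 * ((l : ℕ) + 1) + 1)
      = n * ((Nt : ℝ) + Nr) - n ^ 2 := by
  induction n with
  | zero => simp
  | succ k ih => rw [Finset.sum_range_succ, ih]; push_cast; ring

/-- Zheng–Tse asymptotic DMT at integer multiplexing gain:
the minimum of `∑_{l=1}^t (N_t+N_r−2l+1)·α_l` over nonnegative `α` with
`∑ (1−α_l)⁺ ≤ r` equals `(N_t−r)(N_r−r)`, where `t = min(N_t,N_r)` and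
`0 ≤ r ≤ t` is an integer. -/
theorem dmt_integer_value (Nt Nr : ℕ) (hNt : 0 < Nt) (hNr : 0 < Nr)
    (r : ℕ) (hr : r ≤ min Nt Nr) :
    IsLeast
      {s : ℝ | ∃ α : Fin (min Nt Nr) → ℝ, (∀ l, 0 ≤ α l) ∧
        (∑ l : Fin (min Nt Nr), max (1 - α l) 0) ≤ (r : ℝ) ∧
        s = ∑ l : Fin (min Nt Nr), ((Nt : ℝ) + Nr - 2 * ((l : ℕ) + 1) + 1) * α l}
      (((Nt : ℝ) - r) * ((Nr : ℝ) - r)) := by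
  set t := min Nt Nr with ht
  have htNt : t ≤ Nt := Nat.min_le_left _ _
  have htNr : t ≤ Nr := Nat.min_le_right _ _
  have hval : ((Nt : ℝ) - r) * ((Nr : ℝ) - r)
      = ((t : ℝ) * ((Nt : ℝ) + Nr) - (t : ℝ) ^ 2)
        - ((r : ℝ) * ((Nt : ℝ) + Nr) - (r : ℝ) ^ 2) := by
    rcases Nat.le_total Nt Nr with h | h
    · have h1 : t = Nt := min_eq_left h
      rw [h1]; push_cast; ring
    · have h1 : t = Nr := min_eq_right h
      rw [h1]; push_cast; ring
  constructor
  · -- membership : take α l = 0 for l < r, 1 otherwise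
    refine ⟨fun l => if (l : ℕ) < r then 0 else 1, ?_, ?_, ?_⟩
    · intro l; by_cases h : (l : ℕ) < r <;> simp [h]
    · have heq : (∑ l : Fin t, max (1 - (if (l : ℕ) < r then (0:ℝ) else 1)) 0)
          = ∑ l : Fin t, (if (l : ℕ) < r then (1:ℝ) else 0) := by
        refine Finset.sum_congr rfl fun l _ => ?_
        by_cases h : (l : ℕ) < r <;> simp [h]
      rw [heq, Fin.sum_univ_eq_sum_range (fun l => if l < r then (1:ℝ) else 0) t]
      have hsub : ∑ l ∈ Finset.range r, (if l < r then (1:ℝ) else 0)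
          = ∑ l ∈ Finset.range t, (if l < r then (1:ℝ) else 0) := by
        refine Finset.sum_subset (Finset.range_subset_range.2 hr) ?_
        intro x _ hx
        rw [Finset.mem_range] at hx
        simp [hx]
      rw [← hsub]
      have : ∀ l ∈ Finset.range r, (if l < r then (1:ℝ) else 0) = 1 := by
        intro l hl; rw [Finset.mem_range] at hl; simp [hl]
      rw [Finset.sum_congr rfl this, Finset.sum_const, Finset.card_range]
      simp
    · have heq : (∑ l : Fin t, ((Nt : ℝ) + Nr - 2 * ((l : ℕ) + 1) + 1)
            * (if (l : ℕ) < r then (0:ℝ) else 1))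
          = ∑ l : Fin t, (((Nt : ℝ) + Nr - 2 * ((l : ℕ) + 1) + 1)
            - (if (l : ℕ) < r then ((Nt : ℝ) + Nr - 2 * ((l : ℕ) + 1) + 1) else 0)) := by
        refine Finset.sum_congr rfl fun l _ => ?_
        by_cases h : (l : ℕ) < r <;> simp [h]
      rw [heq, Finset.sum_sub_distrib]
      rw [Fin.sum_univ_eq_sum_range (fun l => (Nt : ℝ) + Nr - 2 * ((l : ℕ) + 1) + 1) t]
      rw [Fin.sum_univ_eq_sum_range
        (fun l => if l < r then ((Nt : ℝ) + Nr - 2 * ((l : ℕ) + 1) + 1) else 0) t]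
      have hsub : ∑ l ∈ Finset.range r,
            (if l < r then ((Nt : ℝ) + Nr - 2 * ((l : ℕ) + 1) + 1) else 0)
          = ∑ l ∈ Finset.range t,
            (if l < r then ((Nt : ℝ) + Nr - 2 * ((l : ℕ) + 1) + 1) else 0) := by
        refine Finset.sum_subset (Finset.range_subset_range.2 hr) ?_
        intro x _ hx
        rw [Finset.mem_range] at hx
        simp [hx]
      rw [← hsub]
      have h2 : ∑ l ∈ Finset.range r,
            (if l < r then ((Nt : ℝ) + Nr - 2 * ((l : ℕ) + 1) + 1) else 0)
          = ∑ l ∈ Finset.range r, ((Nt : ℝ) + Nr - 2 * ((l : ℕ) + 1) + 1) := by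
        refine Finset.sum_congr rfl fun l hl => ?_
        rw [Finset.mem_range] at hl; simp [hl]
      rw [h2, sum_c_range, sum_c_range, hval]
  · -- lower bound
    rintro s ⟨α, hα0, hcon, rfl⟩
    set cstar : ℝ := max ((Nt : ℝ) + Nr - 2 * r - 1) 0 with hcstar
    have hcstar0 : 0 ≤ cstar := le_max_right _ _
    have key : ∀ l : Fin t,
        ((Nt : ℝ) + Nr - 2 * ((l : ℕ) + 1) + 1)
          - (if (l : ℕ) < r then ((Nt : ℝ) + Nr - 2 * ((l : ℕ) + 1) + 1) - cstar else 0)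
          - cstar * max (1 - α l) 0
        ≤ ((Nt : ℝ) + Nr - 2 * ((l : ℕ) + 1) + 1) * α l := by
      intro l
      set c : ℝ := (Nt : ℝ) + Nr - 2 * ((l : ℕ) + 1) + 1 with hc
      set β : ℝ := max (1 - α l) 0 with hβ
      have hlt : ((l : ℕ) : ℝ) + 1 ≤ (t : ℝ) := by exact_mod_cast l.isLt
      have htNt' : (t : ℝ) ≤ Nt := by exact_mod_cast htNt
      have htNr' : (t : ℝ) ≤ Nr := by exact_mod_cast htNr
      have hcpos : 1 ≤ c := by rw [hc]; linarith
      have hβ0 : 0 ≤ β := le_max_right _ _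
      have hβ1 : β ≤ 1 := by
        have := hα0 l
        apply max_le <;> linarith
      have hαβ : 1 - β ≤ α l := by
        have := le_max_left (1 - α l) 0
        linarith
      by_cases h : (l : ℕ) < r
      · rw [if_pos h]
        have hlr : ((l : ℕ) : ℝ) + 1 ≤ (r : ℝ) := by exact_mod_cast h
        have hcc : cstar ≤ c := by
          apply max_le
          · rw [hc]; linarith
          · linarith
        have h1 : cstar * (1 - β) ≤ c * (1 - β) :=
          mul_le_mul_of_nonneg_right hcc (by linarith)
        have h2 : c * (1 - β) ≤ c * α l :=
          mul_le_mul_of_nonneg_left hαβ (by linarith)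
        nlinarith
      · rw [if_neg h]
        have hrl : (r : ℝ) ≤ ((l : ℕ) : ℝ) := by exact_mod_cast Nat.le_of_not_lt h
        have hcc : c ≤ cstar := by
          refine le_trans ?_ (le_max_left _ _)
          rw [hc]; linarith
        have h1 : c * (1 - β) ≤ c * α l :=
          mul_le_mul_of_nonneg_left hαβ (by linarith)
        have h2 : c * β ≤ cstar * β := mul_le_mul_of_nonneg_right hcc hβ0
        nlinarith
    have hsum := Finset.sum_le_sum (fun l (_ : l ∈ Finset.univ) => key l)
    rw [show (fun l : Fin t =>
        ((Nt : ℝ) + Nr - 2 * ((l : ℕ) + 1) + 1)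
          - (if (l : ℕ) < r then ((Nt : ℝ) + Nr - 2 * ((l : ℕ) + 1) + 1) - cstar else 0)
          - cstar * max (1 - α l) 0) = fun l : Fin t =>
        (((Nt : ℝ) + Nr - 2 * ((l : ℕ) + 1) + 1)
          - (if (l : ℕ) < r then ((Nt : ℝ) + Nr - 2 * ((l : ℕ) + 1) + 1) - cstar else 0))
          - cstar * max (1 - α l) 0 from rfl] at hsum
    rw [Finset.sum_sub_distrib, Finset.sum_sub_distrib, ← Finset.mul_sum] at hsum
    have hA : ∑ l : Fin t, ((Nt : ℝ) + Nr - 2 * ((l : ℕ) + 1) + 1)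
        = (t : ℝ) * ((Nt : ℝ) + Nr) - (t : ℝ) ^ 2 := by
      rw [Fin.sum_univ_eq_sum_range (fun l => (Nt : ℝ) + Nr - 2 * ((l : ℕ) + 1) + 1) t,
        sum_c_range]
    have hB : ∑ l : Fin t,
          (if (l : ℕ) < r then ((Nt : ℝ) + Nr - 2 * ((l : ℕ) + 1) + 1) - cstar else 0)
        = ((r : ℝ) * ((Nt : ℝ) + Nr) - (r : ℝ) ^ 2) - r * cstar := by
      rw [Fin.sum_univ_eq_sum_range
        (fun l => if l < r then ((Nt : ℝ) + Nr - 2 * ((l : ℕ) + 1) + 1) - cstar else 0) t]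
      have hsub : ∑ l ∈ Finset.range r,
            (if l < r then ((Nt : ℝ) + Nr - 2 * ((l : ℕ) + 1) + 1) - cstar else 0)
          = ∑ l ∈ Finset.range t,
            (if l < r then ((Nt : ℝ) + Nr - 2 * ((l : ℕ) + 1) + 1) - cstar else 0) := by
        refine Finset.sum_subset (Finset.range_subset_range.2 hr) ?_
        intro x _ hx
        rw [Finset.mem_range] at hx
        simp [hx]
      rw [← hsub]
      have h2 : ∑ l ∈ Finset.range r,
            (if l < r then ((Nt : ℝ) + Nr - 2 * ((l : ℕ) + 1) + 1) - cstar else 0)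
          = ∑ l ∈ Finset.range r, (((Nt : ℝ) + Nr - 2 * ((l : ℕ) + 1) + 1) - cstar) := by
        refine Finset.sum_congr rfl fun l hl => ?_
        rw [Finset.mem_range] at hl; simp [hl]
      rw [h2, Finset.sum_sub_distrib, sum_c_range, Finset.sum_const, Finset.card_range]
      simp [mul_comm]
    rw [hA, hB] at hsum
    have hC : cstar * (∑ l : Fin t, max (1 - α l) 0) ≤ cstar * r :=
      mul_le_mul_of_nonneg_left hcon hcstar0
    rw [hval]
    linarith
end

section
/- For integer multiplexing gain r with 0 ≤ r ≤ t = min(N_t,N_r), the piecewise-linear function d(r) obtained as the minimum of ∑_{l=1}^t (N_t+N_r−2l+1)α_l over nonnegative α with ∑(1−α_l)⁺ ≤ r is decreasing in r and satisfies d(0) = N_t·N_r and d(t) = 0. -/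
open Finset

lemma sum_range_id_real' (n : ℕ) : ∑ i ∈ Finset.range n, ((i : ℝ) + 1) = n * (n + 1) / 2 := by
  induction n with
  | zero => simp
  | succ n ih => rw [Finset.sum_range_succ, ih]; push_cast; ring

/-- The asymptotic DMT curve `d(r)`, defined for integer `0 ≤ r ≤ t = min(N_t,N_r)`
as the minimum of `∑_{l=1}^t (N_t+N_r−2l+1)·α_l` over nonnegative `α` with
`∑ (1−α_l)⁺ ≤ r`, is decreasing in `r`, with `d(0) = N_t·N_r` and `d(t) = 0`. -/
theorem dmt_curve_properties (Nt Nr : ℕ) (hNt : 0 < Nt) (hNr : 0 < Nr) :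
    let t := min Nt Nr
    let d : ℕ → ℝ := fun r => sInf
      {s : ℝ | ∃ α : Fin t → ℝ, (∀ l, 0 ≤ α l) ∧
        (∑ l : Fin t, max (1 - α l) 0) ≤ (r : ℝ) ∧
        s = ∑ l : Fin t, ((Nt : ℝ) + Nr - 2 * ((l : ℕ) + 1) + 1) * α l}
    (∀ r₁ r₂ : ℕ, r₁ ≤ r₂ → r₂ ≤ t → d r₂ ≤ d r₁) ∧
    d 0 = (Nt : ℝ) * Nr ∧ d t = 0 := by
  intro t d
  set S : ℕ → Set ℝ := fun r =>
    {s : ℝ | ∃ α : Fin t → ℝ, (∀ l, 0 ≤ α l) ∧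
        (∑ l : Fin t, max (1 - α l) 0) ≤ (r : ℝ) ∧
        s = ∑ l : Fin t, ((Nt : ℝ) + Nr - 2 * ((l : ℕ) + 1) + 1) * α l} with hS
  have hd : ∀ r, d r = sInf (S r) := fun r => rfl
  -- coefficient positivity
  have hcoef : ∀ l : Fin t, (0 : ℝ) ≤ (Nt : ℝ) + Nr - 2 * ((l : ℕ) + 1) + 1 := by
    intro l
    have h1 : (l : ℕ) + 1 ≤ Nt := le_trans l.isLt (min_le_left _ _)
    have h2 : (l : ℕ) + 1 ≤ Nr := le_trans l.isLt (min_le_right _ _)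
    have h1' : ((l : ℕ) : ℝ) + 1 ≤ Nt := by exact_mod_cast h1
    have h2' : ((l : ℕ) : ℝ) + 1 ≤ Nr := by exact_mod_cast h2
    linarith
  -- sum of coefficients
  have hsum : ∑ l : Fin t, ((Nt : ℝ) + Nr - 2 * ((l : ℕ) + 1) + 1) = (Nt : ℝ) * Nr := by
    have h1 : ∑ l : Fin t, ((Nt : ℝ) + Nr - 2 * ((l : ℕ) + 1) + 1)
        = ∑ i ∈ Finset.range t, ((Nt : ℝ) + Nr - 2 * ((i : ℝ) + 1) + 1) :=
      Fin.sum_univ_eq_sum_range (fun i => (Nt : ℝ) + Nr - 2 * ((i : ℝ) + 1) + 1) t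
    rw [h1]
    have h2 : ∀ i ∈ Finset.range t, ((Nt : ℝ) + Nr - 2 * ((i : ℝ) + 1) + 1)
        = ((Nt : ℝ) + Nr + 1) - 2 * ((i : ℝ) + 1) := by intro i _; ring
    rw [Finset.sum_congr rfl h2, Finset.sum_sub_distrib, Finset.sum_const,
      Finset.card_range, ← Finset.mul_sum, sum_range_id_real' t]
    have ht : (t : ℝ) = min Nt Nr := by norm_cast
    rcases le_total Nt Nr with h | h
    · have : t = Nt := min_eq_left h
      rw [this]; push_cast; ring
    · have : t = Nr := min_eq_right h
      rw [this]; push_cast; ring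
  -- every element of S r is nonnegative
  have hnonneg : ∀ r : ℕ, ∀ s ∈ S r, (0 : ℝ) ≤ s := by
    rintro r s ⟨α, hα, _, rfl⟩
    exact Finset.sum_nonneg fun l _ => mul_nonneg (hcoef l) (hα l)
  have hbdd : ∀ r : ℕ, BddBelow (S r) := fun r => ⟨0, fun s hs => hnonneg r s hs⟩
  -- α = 1 witness: Nt*Nr ∈ S r for every r
  have hmem1 : ∀ r : ℕ, ((Nt : ℝ) * Nr) ∈ S r := by
    intro r
    refine ⟨fun _ => 1, fun _ => zero_le_one, ?_, ?_⟩
    · simp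
    · simp [hsum]
  have hne : ∀ r : ℕ, (S r).Nonempty := fun r => ⟨_, hmem1 r⟩
  -- monotonicity of S
  have hmono : ∀ r₁ r₂ : ℕ, r₁ ≤ r₂ → S r₁ ⊆ S r₂ := by
    rintro r₁ r₂ h s ⟨α, hα, hc, rfl⟩
    exact ⟨α, hα, le_trans hc (by exact_mod_cast h), rfl⟩
  refine ⟨?_, ?_, ?_⟩
  · intro r₁ r₂ h _
    rw [hd, hd]
    exact csInf_le_csInf (hbdd r₂) (hne r₁) (hmono r₁ r₂ h)
  · rw [hd]
    apply le_antisymm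
    · exact csInf_le (hbdd 0) (hmem1 0)
    · apply le_csInf (hne 0)
      rintro s ⟨α, hα, hc, rfl⟩
      -- constraint sum ≤ 0 with nonneg terms forces each max = 0, so α l ≥ 1
      have hge1 : ∀ l : Fin t, 1 ≤ α l := by
        intro l
        have hterm : ∀ j ∈ Finset.univ, (0 : ℝ) ≤ max (1 - α j) 0 := fun j _ => le_max_right _ _
        have hz : ∑ l : Fin t, max (1 - α l) 0 = 0 :=
          le_antisymm (by simpa using hc) (Finset.sum_nonneg hterm)
        have := (Finset.sum_eq_zero_iff_of_nonneg hterm).mp hz l (Finset.mem_univ l)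
        have : (1 : ℝ) - α l ≤ 0 := by
          by_contra hlt
          push_neg at hlt
          rw [max_eq_left hlt.le] at this
          linarith
        linarith
      calc (Nt : ℝ) * Nr = ∑ l : Fin t, ((Nt : ℝ) + Nr - 2 * ((l : ℕ) + 1) + 1) := hsum.symm
        _ ≤ ∑ l : Fin t, ((Nt : ℝ) + Nr - 2 * ((l : ℕ) + 1) + 1) * α l := by
            apply Finset.sum_le_sum
            intro l _
            have := hcoef l
            nlinarith [hge1 l]
  · rw [hd]
    apply le_antisymm
    · apply csInf_le (hbdd t)
      refine ⟨fun _ => 0, fun _ => le_refl 0, ?_, by simp⟩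
      simp
    · exact le_csInf (hne t) (hnonneg t)
end

section
/- Let g, N_t > 0, 0 < b < 1, and define ξ(η) = (N_t/η)((1+gη)^b − 1), K(η) = (1+gη)^b − b·g·η·(1+gη)^{b−1} − 1, and for a positive integer a let J(x) be the logarithmic derivative of the regularized incomplete Gamma function of shape a. Then J(ξ(η))·K(η)/η → (a/N_t)·(1−b) as η → ∞. -/
/-!
Writing `ξ = ξ(η)`, the quantity is `ξ J(ξ) · K(η) / (N_t ((1 + gη)^b - 1))`. Since `b < 1`,
`ξ(η) → 0⁺`, and `x J(x) → a` as `x → 0⁺` because `∫₀ˣ t^(a-1) e^(-t) dt ~ x^a / a`.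
Dividing `K(η)` and `(1 + gη)^b - 1` by `(1 + gη)^b` shows that their ratio tends to `1 - b`.
-/

open Filter Real Topology intervalIntegral

section LowerIncompleteGamma

variable (n : ℕ) {x : ℝ}

theorem exp_neg_mul_le_integral_pow_mul_exp_neg (hx : 0 ≤ x) :
    exp (-x) * (x ^ (n + 1) / (n + 1)) ≤ ∫ t in (0 : ℝ)..x, t ^ n * exp (-t) := by
  calc exp (-x) * (x ^ (n + 1) / (n + 1)) = ∫ t in (0 : ℝ)..x, t ^ n * exp (-x) := by
        rw [integral_mul_const, integral_pow]; ring
    _ ≤ ∫ t in (0 : ℝ)..x, t ^ n * exp (-t) := by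
        refine integral_mono_on hx
          ((by fun_prop : Continuous _).intervalIntegrable _ _)
          ((by fun_prop : Continuous _).intervalIntegrable _ _) fun t ⟨ht0, htx⟩ => ?_
        exact mul_le_mul_of_nonneg_left (exp_le_exp.2 (neg_le_neg htx)) (pow_nonneg ht0 n)

theorem integral_pow_mul_exp_neg_le (hx : 0 ≤ x) :
    ∫ t in (0 : ℝ)..x, t ^ n * exp (-t) ≤ x ^ (n + 1) / (n + 1) := by
  calc ∫ t in (0 : ℝ)..x, t ^ n * exp (-t) ≤ ∫ t in (0 : ℝ)..x, t ^ n := by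
        refine integral_mono_on hx
          ((by fun_prop : Continuous _).intervalIntegrable _ _)
          ((by fun_prop : Continuous _).intervalIntegrable _ _) fun t ⟨ht0, _⟩ => ?_
        exact mul_le_of_le_one_right (pow_nonneg ht0 n) (exp_le_one_iff.2 (neg_nonpos.2 ht0))
    _ = x ^ (n + 1) / (n + 1) := by rw [integral_pow]; ring

/-- Since `e^{-x} x^{n+1}/(n+1) ≤ ∫₀ˣ tⁿ e^{-t} dt ≤ x^{n+1}/(n+1)`, the ratio is squeezed
between `(n+1) e^{-x}` and `n+1`. -/
theorem tendsto_pow_succ_mul_exp_neg_div_integral :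
    Tendsto (fun x : ℝ => x ^ (n + 1) * exp (-x) / ∫ t in (0 : ℝ)..x, t ^ n * exp (-t))
      (𝓝[>] 0) (𝓝 (n + 1)) := by
  have hexp : Tendsto (fun x : ℝ => (n + 1) * exp (-x)) (𝓝[>] 0) (𝓝 (n + 1)) := by
    have : Continuous fun x : ℝ => ((n : ℝ) + 1) * exp (-x) := by fun_prop
    simpa using (this.tendsto 0).mono_left nhdsWithin_le_nhds
  refine tendsto_of_tendsto_of_tendsto_of_le_of_le' hexp tendsto_const_nhds ?_ ?_
  all_goals
    filter_upwards [self_mem_nhdsWithin] with x (hx : 0 < x)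
    have hlower := exp_neg_mul_le_integral_pow_mul_exp_neg n hx.le
    have hpos : 0 < exp (-x) * (x ^ (n + 1) / (n + 1)) := by positivity
  · calc (n + 1) * exp (-x) = x ^ (n + 1) * exp (-x) / (x ^ (n + 1) / (n + 1)) := by
          field_simp
      _ ≤ _ := div_le_div_of_nonneg_left (by positivity) (hpos.trans_le hlower)
            (integral_pow_mul_exp_neg_le n hx.le)
  · calc _ ≤ x ^ (n + 1) * exp (-x) / (exp (-x) * (x ^ (n + 1) / (n + 1))) :=
          div_le_div_of_nonneg_left (by positivity) hpos hlower
      _ = n + 1 := by field_simp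

end LowerIncompleteGamma

theorem one_lt_one_add_mul_rpow {g η b : ℝ} (hg : 0 < g) (hη : 0 < η) (hb : 0 < b) :
    1 < (1 + g * η) ^ b :=
  one_lt_rpow (by nlinarith) hb

/-- `0 < ξ(η) ≤ N g^b η^{b-1}`, by subadditivity of `x ↦ x^b` for `b ≤ 1`. -/
theorem tendsto_div_mul_one_add_mul_rpow_sub_one {g N b : ℝ} (hg : 0 < g) (hN : 0 < N)
    (hb0 : 0 < b) (hb1 : b < 1) :
    Tendsto (fun η : ℝ => N / η * ((1 + g * η) ^ b - 1)) atTop (𝓝[>] 0) := by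
  have hpos : ∀ᶠ η in atTop, 0 < N / η * ((1 + g * η) ^ b - 1) := by
    filter_upwards [eventually_gt_atTop 0] with η hη
    have := one_lt_one_add_mul_rpow hg hη hb0
    exact mul_pos (by positivity) (by linarith)
  have hbound : ∀ᶠ η in atTop, N / η * ((1 + g * η) ^ b - 1) ≤ N * g ^ b * η ^ (b - 1) := by
    filter_upwards [eventually_gt_atTop 0] with η hη
    have hsub : (1 + g * η) ^ b ≤ 1 + g ^ b * η ^ b := by
      simpa [mul_rpow hg.le hη.le] using
        rpow_add_le_add_rpow zero_le_one (by positivity : 0 ≤ g * η) hb0.le hb1.le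
    calc N / η * ((1 + g * η) ^ b - 1) ≤ N / η * (g ^ b * η ^ b) :=
          mul_le_mul_of_nonneg_left (by linarith) (by positivity)
      _ = N * g ^ b * η ^ (b - 1) := by rw [rpow_sub_one hη.ne']; ring
  have hdecay : Tendsto (fun η : ℝ => N * g ^ b * η ^ (b - 1)) atTop (𝓝 0) := by
    simpa using (tendsto_rpow_neg_atTop (sub_pos.2 hb1)).const_mul (N * g ^ b)
  refine tendsto_nhdsWithin_iff.2 ⟨?_, hpos⟩
  exact squeeze_zero' (hpos.mono fun _ h => h.le) hbound hdecay

theorem tendsto_rpow_sub_mul_rpow_sub_one_div {b : ℝ} (hb : 0 < b) :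
    Tendsto (fun u : ℝ => (u ^ b - b * (u - 1) * u ^ (b - 1) - 1) / (u ^ b - 1)) atTop
      (𝓝 (1 - b)) := by
  have hdecay : Tendsto (fun u : ℝ => u ^ (-b)) atTop (𝓝 0) := tendsto_rpow_neg_atTop hb
  have hlim : Tendsto (fun u : ℝ => ((1 - b) + b * u⁻¹ - u ^ (-b)) / (1 - u ^ (-b))) atTop
      (𝓝 (((1 - b) + b * 0 - 0) / (1 - 0))) :=
    ((tendsto_const_nhds.add (tendsto_inv_atTop_zero.const_mul b)).sub hdecay).div
      (tendsto_const_nhds.sub hdecay) (by norm_num)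
  rw [show ((1 - b) + b * 0 - 0) / (1 - 0) = 1 - b by ring] at hlim
  refine hlim.congr' ?_
  filter_upwards [eventually_gt_atTop 0] with u hu
  have hub : u ^ b ≠ 0 := (rpow_pos_of_pos hu b).ne'
  rw [← mul_div_mul_left _ _ hub, rpow_neg hu.le, rpow_sub_one hu.ne']
  field_simp
  ring

/-- Key computation in the proof of Theorem 2: with
`ξ(η) = (N_t/η)((1+gη)^b − 1)`, `K(η) = (1+gη)^b − b·g·η·(1+gη)^(b−1) − 1`,
and `J` the logarithmic derivative of the regularized lower incomplete Gamma
function of positive integer shape `a`, one has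
`J(ξ(η))·K(η)/η → (a/N_t)·(1−b)` as `η → ∞`. -/
theorem JK_asymptotics (g Nt b : ℝ) (hg : 0 < g) (hNt : 0 < Nt)
    (hb0 : 0 < b) (hb1 : b < 1) (a : ℕ) (ha : 0 < a) :
    Tendsto (fun η : ℝ =>
        (((fun x : ℝ => (x ^ (a - 1) * Real.exp (-x) / (Nat.factorial (a - 1) : ℝ)) /
              ((1 / (Nat.factorial (a - 1) : ℝ)) *
                ∫ t in (0:ℝ)..x, t ^ (a - 1) * Real.exp (-t)))
            ((Nt / η) * ((1 + g * η) ^ b - 1))) *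
          ((1 + g * η) ^ b - b * g * η * (1 + g * η) ^ (b - 1) - 1)) / η)
      atTop (nhds (((a : ℝ) / Nt) * (1 - b))) := by
  obtain ⟨n, rfl⟩ : ∃ n, a = n + 1 := ⟨a - 1, by omega⟩
  have hJ := (tendsto_pow_succ_mul_exp_neg_div_integral n).comp
    (tendsto_div_mul_one_add_mul_rpow_sub_one hg hNt hb0 hb1)
  have hu : Tendsto (fun η : ℝ => 1 + g * η) atTop atTop :=
    tendsto_atTop_add_const_left _ 1 (tendsto_id.const_mul_atTop hg)
  have hK := ((tendsto_rpow_sub_mul_rpow_sub_one_div hb0).comp hu).div_const Nt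
  convert (hJ.mul hK).congr' ?_ using 2
  · push_cast; ring
  filter_upwards [eventually_gt_atTop 0] with η hη
  have hD : (1 + g * η) ^ b - 1 ≠ 0 := (sub_pos.2 (one_lt_one_add_mul_rpow hg hη hb0)).ne'
  simp only [Function.comp_apply, Nat.add_sub_cancel, one_div_mul_eq_div, add_sub_cancel_left,
    div_div_div_cancel_right₀ (Nat.cast_ne_zero.2 n.factorial_ne_zero : (n.factorial : ℝ) ≠ 0)]
  generalize (1 + g * η) ^ b - 1 = D at hD ⊢
  rw [← mul_assoc b g η, pow_succ]
  field_simp [hη.ne', hNt.ne']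
end
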